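/- The number of weights μ in the root lattice of sl_n that are strictly dominant relative to the l-dilated fundamental alcove, i.e., dominant integral weights in the root lattice with ⟨μ + ρ, θ∨⟩ < l (θ the highest root), equals the rational Catalan number c_{l−n,n} = (1/l)·binomial(l, n), for l coprime to n and l ≥ n+1. -/

import Mathlib

/-!
Shift an alcove point by `ρ' = (n - 1, …, 1, 0)`: the points `x` correspond to the strictly
decreasing integer vectors `x + ρ'` of spread `< l` and sum `∑ ρ'`, that is, to `n`-element sets
of integers of diameter `< l` with that sum. Reduction mod `l` maps these bijectively onto the
`n`-subsets of `ℤ/l` with sum `∑ ρ'`. Indeed, lift a subset `A` of `ℤ/l` into the window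
`[s, s + l)`: the sum of the lift is nondecreasing in `s`, grows by at most `l` per step, stays in
the class of `∑ A` mod `l` and is unbounded in both directions. So exactly one lift has the
prescribed sum (two lifts with equal sums agree, since every representative is monotone in `s`).
Translating an `n`-subset by `k` adds `n k` to its sum, and `n` is a unit mod `l`, so the `l`
sum classes all have the same size, which is therefore `C(l, n) / l`.
-/

open Finset

section SubsetsWithSum

variable {G : Type*} [AddCommGroup G] [Fintype G] [DecidableEq G]

def subsetsWithSum (n : ℕ) (c : G) : Finset (Finset G) :=
  {A ∈ (univ : Finset G).powersetCard n | ∑ a ∈ A, a = c}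

lemma mem_subsetsWithSum {n : ℕ} {c : G} {A : Finset G} :
    A ∈ subsetsWithSum n c ↔ #A = n ∧ ∑ a ∈ A, a = c := by
  simp [subsetsWithSum]

omit [Fintype G] [DecidableEq G] in
lemma sum_map_addRight (A : Finset G) (k : G) :
    ∑ a ∈ A.map (Equiv.addRight k).toEmbedding, a = ∑ a ∈ A, a + #A • k := by
  simp [sum_add_distrib]

lemma card_subsetsWithSum_add_nsmul (n : ℕ) (c k : G) :
    #(subsetsWithSum n (c + n • k)) = #(subsetsWithSum n c) := by
  symm
  refine card_nbij' (·.map (Equiv.addRight k).toEmbedding)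
    (·.map (Equiv.addRight (-k)).toEmbedding) ?_ ?_ ?_ ?_
  · intro A hA
    simp only [mem_coe, mem_subsetsWithSum] at hA ⊢
    rw [card_map, sum_map_addRight, hA.1, hA.2]
    exact ⟨rfl, rfl⟩
  · intro A hA
    simp only [mem_coe, mem_subsetsWithSum] at hA ⊢
    rw [card_map, sum_map_addRight, hA.1, hA.2]
    exact ⟨rfl, by simp⟩
  all_goals intro A _; ext; simp

lemma card_subsetsWithSum_mul_card {n : ℕ} (hn : Function.Surjective fun k : G ↦ n • k)
    (c : G) : #(subsetsWithSum n c) * Fintype.card G = (Fintype.card G).choose n := by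
  have hfiber (c' : G) : #(subsetsWithSum n c') = #(subsetsWithSum n c) := by
    obtain ⟨k, hk⟩ := hn (c' - c)
    rw [← card_subsetsWithSum_add_nsmul n c k, show n • k = c' - c from hk, add_sub_cancel]
  calc #(subsetsWithSum n c) * Fintype.card G = ∑ c' : G, #(subsetsWithSum n c') := by
        simp [hfiber, mul_comm]
    _ = #((univ : Finset G).powersetCard n) :=
        (card_eq_sum_card_fiberwise fun _ _ ↦ mem_coe.2 (mem_univ _)).symm
    _ = (Fintype.card G).choose n := by rw [card_powersetCard, card_univ]

end SubsetsWithSum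

lemma ZMod.nsmul_surjective_of_coprime {l n : ℕ} (h : Nat.Coprime l n) :
    Function.Surjective fun k : ZMod l ↦ n • k := by
  intro c
  refine ⟨(ZMod.unitOfCoprime n h.symm)⁻¹ * c, ?_⟩
  simp only [nsmul_eq_mul, ← mul_assoc]
  rw [← ZMod.coe_unitOfCoprime n h.symm, Units.mul_inv, one_mul]

lemma Int.eq_of_intCast_eq {l : ℕ} {a b : ℤ} (h : (a : ZMod l) = b) (hab : |a - b| < l) :
    a = b := by
  have hdvd : (l : ℤ) ∣ a - b := (ZMod.intCast_eq_intCast_iff_dvd_sub b a l).1 h.symm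
  exact sub_eq_zero.1 (Int.eq_zero_of_abs_lt_dvd hdvd hab)

lemma Int.exists_eq_of_monotone_of_add_one_le {f : ℤ → ℤ} {d N : ℤ} (hf : Monotone f)
    (hstep : ∀ s, f (s + 1) ≤ f s + d) (hdvd : ∀ s, d ∣ N - f s)
    (hlow : ∃ s, f s ≤ N) (hhigh : ∃ s, N < f s) : ∃ s, f s = N := by
  obtain ⟨b, hb⟩ := hhigh
  obtain ⟨s, hs, hmax⟩ := Int.exists_greatest_of_bdd (P := fun s ↦ f s ≤ N)
    ⟨b, fun z hz ↦ le_of_lt (hf.reflect_lt (hz.trans_lt hb))⟩ hlow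
  have hnext : N < f (s + 1) := lt_of_not_ge fun h ↦ by linarith [hmax _ h]
  have hzero : N - f s = 0 :=
    Int.eq_zero_of_abs_lt_dvd (hdvd s) (by rw [abs_of_nonneg (by linarith)]; linarith [hstep s])
  exact ⟨s, by linarith⟩

section WindowLift

variable {l : ℕ}

/-- The representative of `r` in the window `[s, s + l)`. -/
def windowLift (s : ℤ) (r : ZMod l) : ℤ := s + (r - s).val

lemma le_windowLift (s : ℤ) (r : ZMod l) : s ≤ windowLift s r :=
  le_add_of_nonneg_right (Int.natCast_nonneg _)

variable [NeZero l]

@[simp]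
lemma intCast_windowLift (s : ℤ) (r : ZMod l) : ((windowLift s r : ℤ) : ZMod l) = r := by
  simp [windowLift]

lemma windowLift_lt (s : ℤ) (r : ZMod l) : windowLift s r < s + l := by
  have := ZMod.val_lt (r - (s : ZMod l))
  simp only [windowLift]
  omega

lemma windowLift_injective (s : ℤ) : Function.Injective (windowLift (l := l) s) :=
  Function.LeftInverse.injective (g := Int.cast) (intCast_windowLift s)

lemma windowLift_eq {s t : ℤ} {r : ZMod l} (hr : (t : ZMod l) = r) (hst : s ≤ t)
    (hts : t < s + l) : windowLift s r = t := by
  refine Int.eq_of_intCast_eq (by rw [intCast_windowLift, hr]) (abs_sub_lt_iff.2 ⟨?_, ?_⟩)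
  · linarith [windowLift_lt s r]
  · linarith [le_windowLift s r]

lemma windowLift_add_mul (s k : ℤ) (r : ZMod l) :
    windowLift (s + k * l) r = windowLift s r + k * l :=
  windowLift_eq (by simp) (by linarith [le_windowLift s r]) (by linarith [windowLift_lt s r])

lemma windowLift_mono (r : ZMod l) : Monotone fun s ↦ windowLift s r := by
  intro s s' hss'
  by_cases h : windowLift s r < s'
  · exact h.le.trans (le_windowLift s' r)
  · exact (windowLift_eq (intCast_windowLift s r) (not_lt.1 h)
      (by linarith [windowLift_lt s r])).ge

lemma windowLift_add_one_of_ne {s : ℤ} {r : ZMod l} (h : (s : ZMod l) ≠ r) :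
    windowLift (s + 1) r = windowLift s r := by
  refine windowLift_eq (intCast_windowLift s r) ?_ (by linarith [windowLift_lt s r])
  have : windowLift s r ≠ s := fun he ↦ h (by rw [← he, intCast_windowLift])
  have := le_windowLift s r
  omega

lemma windowLift_add_one_le (s : ℤ) (r : ZMod l) :
    windowLift (s + 1) r ≤ windowLift s r + l := by
  have hl : (1 : ℤ) ≤ l := by exact_mod_cast Nat.one_le_iff_ne_zero.2 (NeZero.ne l)
  calc windowLift (s + 1) r ≤ windowLift (s + 1 * l) r := windowLift_mono r (by linarith)
    _ = windowLift s r + l := by rw [windowLift_add_mul, one_mul]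

def windowSum (A : Finset (ZMod l)) (s : ℤ) : ℤ := ∑ r ∈ A, windowLift s r

lemma windowSum_mono (A : Finset (ZMod l)) : Monotone (windowSum A) :=
  fun _ _ h ↦ sum_le_sum fun r _ ↦ windowLift_mono r h

lemma windowSum_add_mul (A : Finset (ZMod l)) (s k : ℤ) :
    windowSum A (s + k * l) = windowSum A s + k * l * #A := by
  simp [windowSum, windowLift_add_mul, sum_add_distrib, mul_comm]

-- Only the representative of `s` itself moves when the window slides by one.
lemma windowSum_add_one_le (A : Finset (ZMod l)) (s : ℤ) :
    windowSum A (s + 1) ≤ windowSum A s + l := by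
  have hterm (r : ZMod l) :
      windowLift (s + 1) r - windowLift s r ≤ if r = s then (l : ℤ) else 0 := by
    split_ifs with h
    · linarith [windowLift_add_one_le s r]
    · rw [windowLift_add_one_of_ne (Ne.symm h), sub_self]
  have := sum_le_sum fun r (_ : r ∈ A) ↦ hterm r
  rw [sum_sub_distrib, sum_ite_eq'] at this
  unfold windowSum
  split_ifs at this <;> linarith [Int.natCast_nonneg l]

lemma intCast_windowSum (A : Finset (ZMod l)) (s : ℤ) :
    ((windowSum A s : ℤ) : ZMod l) = ∑ r ∈ A, r := by
  simp [windowSum]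

lemma sum_image_windowLift (A : Finset (ZMod l)) (s : ℤ) :
    ∑ t ∈ A.image (windowLift s), t = windowSum A s :=
  sum_image fun _ _ _ _ h ↦ windowLift_injective s h

lemma exists_windowSum_eq {A : Finset (ZMod l)} (hA : A.Nonempty) {N : ℤ}
    (hN : (N : ZMod l) = ∑ r ∈ A, r) : ∃ s, windowSum A s = N := by
  have hlA : (1 : ℤ) ≤ l * #A := by
    exact_mod_cast Nat.one_le_iff_ne_zero.2 (mul_ne_zero (NeZero.ne l) hA.card_pos.ne')
  set m := |N - windowSum A 0|
  have hm := abs_nonneg (N - windowSum A 0)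
  refine Int.exists_eq_of_monotone_of_add_one_le (windowSum_mono A) (windowSum_add_one_le A)
    (fun s ↦ ?_) ⟨0 + -m * l, ?_⟩ ⟨0 + (m + 1) * l, ?_⟩
  · rw [← ZMod.intCast_eq_intCast_iff_dvd_sub, hN, intCast_windowSum]
  · rw [windowSum_add_mul]
    nlinarith [neg_abs_le (N - windowSum A 0)]
  · rw [windowSum_add_mul]
    nlinarith [le_abs_self (N - windowSum A 0)]

lemma image_windowLift_eq_of_windowSum_eq {A : Finset (ZMod l)} {s s' : ℤ}
    (h : windowSum A s = windowSum A s') : A.image (windowLift s) = A.image (windowLift s') := by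
  wlog hss' : s ≤ s' generalizing s s'
  · exact (this h.symm (le_of_not_ge hss')).symm
  refine image_congr fun r hr ↦ ?_
  exact (sum_eq_sum_iff_of_le fun r _ ↦ windowLift_mono r hss').1 h r hr

end WindowLift

def narrowFinsets (n l : ℕ) (N : ℤ) : Set (Finset ℤ) :=
  {S | #S = n ∧ (∀ a ∈ S, ∀ b ∈ S, a - b < l) ∧ ∑ a ∈ S, a = N}

section NarrowFinsets

variable {l : ℕ}

lemma injOn_intCast_of_sub_lt {S : Finset ℤ} (hS : ∀ a ∈ S, ∀ b ∈ S, a - b < l) :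
    Set.InjOn (Int.cast : ℤ → ZMod l) S := fun a ha b hb h ↦
  Int.eq_of_intCast_eq h (abs_sub_lt_iff.2 ⟨hS a ha b hb, hS b hb a ha⟩)

variable [NeZero l]

lemma image_windowLift_image_intCast {S : Finset ℤ} {s : ℤ}
    (hS : ∀ a ∈ S, s ≤ a ∧ a < s + l) :
    (S.image (Int.cast : ℤ → ZMod l)).image (windowLift s) = S := by
  rw [image_image]
  conv_rhs => rw [← image_id (s := S)]
  exact image_congr fun a ha ↦ windowLift_eq rfl (hS a ha).1 (hS a ha).2

lemma image_windowLift_image_intCast_min' {S : Finset ℤ} (hne : S.Nonempty)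
    (hS : ∀ a ∈ S, ∀ b ∈ S, a - b < l) :
    (S.image (Int.cast : ℤ → ZMod l)).image (windowLift (S.min' hne)) = S :=
  image_windowLift_image_intCast fun a ha ↦
    ⟨S.min'_le a ha, by linarith [hS a ha _ (S.min'_mem hne)]⟩

lemma ncard_narrowFinsets {n : ℕ} (hn : 1 ≤ n) (N : ℤ) :
    (narrowFinsets n l N).ncard = #(subsetsWithSum n (N : ZMod l)) := by
  rw [← Set.ncard_coe_finset]
  refine Set.ncard_congr (fun S _ ↦ S.image Int.cast) ?_ ?_ ?_
  · rintro S ⟨hcard, hS, hsum⟩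
    rw [mem_coe, mem_subsetsWithSum, card_image_of_injOn (injOn_intCast_of_sub_lt hS),
      sum_image (injOn_intCast_of_sub_lt hS), ← Int.cast_sum, hsum]
    exact ⟨hcard, rfl⟩
  · rintro S S' ⟨hcard, hS, hsum⟩ ⟨hcard', hS', hsum'⟩ himage
    have hne : S.Nonempty := card_pos.1 (by omega)
    have hne' : S'.Nonempty := card_pos.1 (by omega)
    have hS_eq := image_windowLift_image_intCast_min' hne hS
    have hS'_eq := image_windowLift_image_intCast_min' hne' hS'
    rw [← himage] at hS'_eq
    rw [← hS_eq, ← hS'_eq]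
    refine image_windowLift_eq_of_windowSum_eq ?_
    rw [← sum_image_windowLift, ← sum_image_windowLift, hS_eq, hS'_eq, hsum, hsum']
  · intro A hA
    rw [mem_coe, mem_subsetsWithSum] at hA
    obtain ⟨s, hs⟩ := exists_windowSum_eq (card_pos.1 (by omega)) hA.2.symm
    refine ⟨A.image (windowLift s), ⟨?_, ?_, ?_⟩, ?_⟩
    · rw [card_image_of_injective _ (windowLift_injective s), hA.1]
    · simp only [mem_image]
      rintro _ ⟨r, -, rfl⟩ _ ⟨r', -, rfl⟩
      linarith [le_windowLift s r', windowLift_lt s r]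
    · rw [sum_image_windowLift, hs]
    · rw [image_image]
      conv_rhs => rw [← image_id (s := A)]
      exact image_congr fun r _ ↦ intCast_windowLift s r

end NarrowFinsets

lemma Finset.exists_strictAnti_image_univ_eq {α : Type*} [LinearOrder α] {S : Finset α} {n : ℕ}
    (h : #S = n) : ∃ w : Fin n → α, StrictAnti w ∧ univ.image w = S := by
  refine ⟨fun i ↦ S.orderEmbOfFin h i.rev,
    (S.orderEmbOfFin h).strictMono.comp_strictAnti Fin.rev_strictAnti, coe_injective ?_⟩
  rw [coe_image, coe_univ, Set.image_univ, ← range_orderEmbOfFin S h]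
  exact Fin.rev_surjective.range_comp _

/-- `(n - 1, …, 1, 0)`: the Weyl vector `ρ` of `sl_n` in these coordinates, shifted by a constant
to make it integral. -/
def shiftedRho (n : ℕ) (i : Fin n) : ℤ := (i.rev : ℕ)

lemma strictAnti_add_shiftedRho_iff {n : ℕ} {x : Fin n → ℤ} :
    StrictAnti (x + shiftedRho n) ↔ Antitone x := by
  cases n with
  | zero => exact ⟨fun _ i ↦ i.elim0, fun _ i ↦ i.elim0⟩
  | succ m =>
    rw [Fin.strictAnti_iff_succ_lt, Fin.antitone_iff_succ_le]
    refine forall_congr' fun i ↦ ?_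
    simp only [Pi.add_apply, shiftedRho, Fin.val_rev, Fin.val_succ, Fin.val_castSucc]
    have := i.isLt
    omega

def alcovePoints (n l : ℕ) : Set (Fin n → ℤ) :=
  {x : Fin n → ℤ |
    (∑ i, x i = 0) ∧
    (∀ i j : Fin n, i ≤ j → x j ≤ x i) ∧
    (∀ i j : Fin n, x i - x j ≤ (l : ℤ) - n)}

lemma ncard_alcovePoints {n : ℕ} (hn : 1 ≤ n) (l : ℕ) :
    (alcovePoints n l).ncard = (narrowFinsets n l (∑ i, shiftedRho n i)).ncard := by
  obtain ⟨m, rfl⟩ := Nat.exists_eq_add_of_le' hn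
  refine Set.ncard_congr (fun x _ ↦ univ.image (x + shiftedRho (m + 1))) ?_ ?_ ?_
  · rintro x ⟨hsum, hanti, hspread⟩
    have hw := strictAnti_add_shiftedRho_iff.2 hanti
    refine ⟨?_, ?_, ?_⟩
    · rw [card_image_of_injective _ hw.injective, card_univ, Fintype.card_fin]
    · simp only [mem_image, mem_univ, true_and]
      rintro _ ⟨i, rfl⟩ _ ⟨j, rfl⟩
      have := hspread i j
      simp only [Pi.add_apply, shiftedRho, Fin.val_rev]
      omega
    · rw [sum_image fun i _ j _ h ↦ hw.injective h]
      simp only [Pi.add_apply, sum_add_distrib, hsum, zero_add]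
  · intro x y hx hy h
    have hwx := strictAnti_add_shiftedRho_iff.2 hx.2.1
    have hwy := strictAnti_add_shiftedRho_iff.2 hy.2.1
    have hrange := congrArg ((↑) : Finset ℤ → Set ℤ) h
    simp only [coe_image, coe_univ, Set.image_univ] at hrange
    exact add_right_cancel ((hwx.range_inj hwy).1 hrange)
  · rintro S ⟨hcard, hS, hsum⟩
    obtain ⟨w, hw, hwS⟩ := exists_strictAnti_image_univ_eq hcard
    have hanti : Antitone (w - shiftedRho (m + 1)) :=
      strictAnti_add_shiftedRho_iff.1 (by rwa [sub_add_cancel])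
    refine ⟨w - shiftedRho (m + 1), ⟨?_, fun i j hij ↦ hanti hij, fun i j ↦ ?_⟩, by
      rw [sub_add_cancel, hwS]⟩
    · rw [← hwS, sum_image fun i _ j _ h ↦ hw.injective h] at hsum
      simp only [Pi.sub_apply, sum_sub_distrib, hsum, sub_self]
    · have hfirst := hS _ (hwS ▸ mem_image_of_mem w (mem_univ 0)) _
        (hwS ▸ mem_image_of_mem w (mem_univ (Fin.last m)))
      have hi := hanti (Fin.zero_le i)
      have hj := hanti (Fin.le_last j)
      simp only [Pi.sub_apply, shiftedRho, Fin.val_rev, Fin.val_zero, Fin.val_last]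
        at hfirst hi hj ⊢
      omega

/-- The number of weights `μ` in the root lattice of `sl_n` that are
dominant and lie in the open `l`-dilated fundamental alcove, i.e. dominant integral
weights in the root lattice with `⟨μ + ρ, θ∨⟩ < l` (equivalently `⟨μ, θ∨⟩ ≤ l − n`, since
`⟨ρ, θ∨⟩ = n − 1`), equals the rational Catalan number `c_{l−n,n} = (1/l)·C(l,n)`, for
`l ≥ n + 1` coprime to `n`.

We use the standard model: weights of `sl_n` are vectors `x ∈ ℤⁿ` with `∑ xᵢ = 0` (the
root lattice), dominance means `x₀ ≥ x₁ ≥ ⋯ ≥ x_{n−1}`, and the pairing with the highest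
coroot is `⟨x, θ∨⟩ = max xᵢ − min xⱼ`, so the alcove condition reads
`xᵢ − xⱼ ≤ l − n` for all `i, j`.  The identity is stated multiplied through by `l`. -/
theorem alcove_root_lattice_count
    (n l : ℕ) (hn : 1 ≤ n) (hl : n + 1 ≤ l) (hcop : Nat.Coprime l n) :
    Set.ncard {x : Fin n → ℤ |
        (∑ i, x i = 0) ∧
        (∀ i j : Fin n, i ≤ j → x j ≤ x i) ∧
        (∀ i j : Fin n, x i - x j ≤ (l : ℤ) - n)} * l
      = l.choose n := by
  have : NeZero l := ⟨by omega⟩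
  change (alcovePoints n l).ncard * l = _
  rw [ncard_alcovePoints hn, ncard_narrowFinsets hn]
  simpa only [ZMod.card] using
    card_subsetsWithSum_mul_card (ZMod.nsmul_surjective_of_coprime hcop) _
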